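/- Let α ∈ (1,2) and ρ < α + 1. Define N(u) = ∫_u^∞ e^{ρ r}(e^r − 1)^{−(α+1)} dr for u > 0 and H(x) = ∫_0^x ∫_y^1 N(u) du dy for x ∈ (0,1]. Then lim_{x → 0^+} x^{α−2} H(x) = 1/((2−α)(α−1)α), and ∫_0^1 x·N(x)/H(x) dx = +∞. (By Kyprianou–Loeffen's criterion, this divergence shows that a Lamperti stable process with index α ∈ (1,2) does not creep upwards.) -/

import Mathlib

/-!
Near `0` the density `ℓ_{α,ρ}(r)` behaves like `r ^ (-(α + 1))`. Integration preserves
power-law equivalence at `0` (from the right for exponents `< -1`, from `0` for exponents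
`> -1`), so `N u ∼ u ^ (-α) / α`, `∫_y^1 N ∼ y ^ (1 - α) / (α (α - 1))` and
`H x ∼ x ^ (2 - α) / ((2 - α) (α - 1) α)`. Hence `x N(x) / H(x) ∼ (2 - α) (α - 1) / x`, which
is not integrable at `0`.
-/

open MeasureTheory Set Filter Asymptotics Topology Real

section PowerAsymptotics

theorem integral_Ioc_rpow {a b r : ℝ} (hab : a ≤ b)
    (h : -1 < r ∨ r ≠ -1 ∧ 0 ∉ uIcc a b) :
    ∫ x in Ioc a b, x ^ r = (b ^ (r + 1) - a ^ (r + 1)) / (r + 1) := by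
  rw [← intervalIntegral.integral_of_le hab, integral_rpow h]

theorem isLittleO_const_rpow_nhdsGT {p : ℝ} (hp : p < 0) (c : ℝ) :
    (fun _ : ℝ => c) =o[𝓝[>] 0] fun y => y ^ p :=
  isLittleO_const_left.2 <| .inr <|
    tendsto_norm_atTop_atTop.comp (tendsto_rpow_neg_nhdsGT_zero hp)

variable {f : ℝ → ℝ}

theorem isLittleO_integral_Ioc_zero {β : ℝ} (hβ : -1 < β)
    (h : f =o[𝓝[>] 0] fun y => y ^ β) :
    (fun x => ∫ y in Ioc 0 x, f y) =o[𝓝[>] 0] fun x => x ^ (β + 1) := by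
  have hβ1 : 0 < β + 1 := by linarith
  refine isLittleO_iff.2 fun ε hε => ?_
  obtain ⟨δ, hδ, hbound⟩ :=
    (nhdsGT_basis 0).eventually_iff.1 (isLittleO_iff.1 h (mul_pos hε hβ1))
  filter_upwards [Ioo_mem_nhdsGT hδ] with x ⟨hx0, hxδ⟩
  calc ‖∫ y in Ioc 0 x, f y‖ ≤ ∫ y in Ioc 0 x, ε * (β + 1) * y ^ β := by
        refine norm_integral_le_of_norm_le
          ((intervalIntegral.intervalIntegrable_rpow' hβ).1.const_mul _)
          ((ae_restrict_mem measurableSet_Ioc).mono fun y hy => ?_)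
        simpa [Real.norm_of_nonneg (rpow_nonneg hy.1.le _)] using
          hbound ⟨hy.1, hy.2.trans_lt hxδ⟩
    _ = ε * ‖x ^ (β + 1)‖ := by
        rw [integral_const_mul, integral_Ioc_rpow hx0.le (.inl hβ), zero_rpow hβ1.ne',
          sub_zero, Real.norm_of_nonneg (rpow_nonneg hx0.le _)]
        field_simp

theorem isLittleO_integral_Ioc_one {γ : ℝ} (hγ : γ < -1)
    (hf : ∀ a > 0, IntegrableOn f (Ioc a 1)) (h : f =o[𝓝[>] 0] fun y => y ^ γ) :
    (fun y => ∫ u in Ioc y 1, f u) =o[𝓝[>] 0] fun y => y ^ (γ + 1) := by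
  refine isLittleO_iff.2 fun ε hε => ?_
  obtain ⟨δ, hδ, hbound⟩ := (nhdsGT_basis 0).eventually_iff.1
    (isLittleO_iff.1 h (by nlinarith : 0 < ε / 2 * (-γ - 1)))
  set d := min (δ / 2) 1
  have hd : 0 < d := lt_min (half_pos hδ) one_pos
  have hdδ : d < δ := (min_le_left _ _).trans_lt (half_lt_self hδ)
  filter_upwards [Ioo_mem_nhdsGT hd,
    isLittleO_iff.1 (isLittleO_const_rpow_nhdsGT (by linarith : γ + 1 < 0) (∫ u in Ioc d 1, f u))
      (half_pos hε)] with y ⟨hy0, hyd⟩ hfar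
  have hsplit : ∫ u in Ioc y 1, f u = (∫ u in Ioc y d, f u) + ∫ u in Ioc d 1, f u := by
    rw [← setIntegral_union (Ioc_disjoint_Ioc_of_le le_rfl) measurableSet_Ioc
      ((hf y hy0).mono_set (Ioc_subset_Ioc_right (min_le_right _ _)))
      ((hf y hy0).mono_set (Ioc_subset_Ioc_left hyd.le)),
      Ioc_union_Ioc_eq_Ioc hyd.le (min_le_right _ _)]
  have hnear : ‖∫ u in Ioc y d, f u‖ ≤ ε / 2 * ‖y ^ (γ + 1)‖ := calc
    ‖∫ u in Ioc y d, f u‖ ≤ ∫ u in Ioc y d, ε / 2 * (-γ - 1) * u ^ γ := by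
        refine norm_integral_le_of_norm_le
          ((intervalIntegral.intervalIntegrable_rpow
            (.inr (notMem_uIcc_of_lt hy0 hd))).1.const_mul _)
          ((ae_restrict_mem measurableSet_Ioc).mono fun u hu => ?_)
        simpa [Real.norm_of_nonneg (rpow_nonneg (hy0.trans hu.1).le _)] using
          hbound ⟨hy0.trans hu.1, hu.2.trans_lt hdδ⟩
    _ = ε / 2 * (y ^ (γ + 1) - d ^ (γ + 1)) := by
        rw [integral_const_mul,
          integral_Ioc_rpow hyd.le (.inr ⟨hγ.ne, notMem_uIcc_of_lt hy0 hd⟩)]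
        field_simp [show γ + 1 ≠ 0 by linarith]
        ring
    _ ≤ ε / 2 * ‖y ^ (γ + 1)‖ := by
        rw [Real.norm_of_nonneg (rpow_nonneg hy0.le _)]
        have := rpow_nonneg hd.le (γ + 1)
        nlinarith
  rw [hsplit]
  linarith [norm_add_le (∫ u in Ioc y d, f u) (∫ u in Ioc d 1, f u)]

theorem Asymptotics.IsEquivalent.integral_Ioc_zero {β c : ℝ} (hβ : -1 < β) (hc : c ≠ 0)
    (hf : IntegrableOn f (Ioc 0 1)) (h : f ~[𝓝[>] 0] fun y => c * y ^ β) :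
    (fun x => ∫ y in Ioc 0 x, f y) ~[𝓝[>] 0] fun x => c / (β + 1) * x ^ (β + 1) := by
  have hβ1 : β + 1 ≠ 0 := by linarith
  have hrem : (fun x => ∫ y in Ioc 0 x, (f y - c * y ^ β)) =o[𝓝[>] 0] fun x => x ^ (β + 1) :=
    isLittleO_integral_Ioc_zero hβ (h.isLittleO.trans_isBigO ((isBigO_refl _ _).const_mul_left c))
  refine (hrem.trans_isBigO (isBigO_self_const_mul (div_ne_zero hc hβ1) _ _)).congr' ?_ .rfl
  filter_upwards [Ioo_mem_nhdsGT one_pos] with x ⟨hx0, hx1⟩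
  rw [Pi.sub_apply, integral_sub (hf.mono_set (Ioc_subset_Ioc_right hx1.le))
      ((intervalIntegral.intervalIntegrable_rpow' hβ).1.const_mul c),
    integral_const_mul, integral_Ioc_rpow hx0.le (.inl hβ), zero_rpow hβ1]
  ring

theorem Asymptotics.IsEquivalent.integral_Ioc_one {γ c : ℝ} (hγ : γ < -1) (hc : c ≠ 0)
    (hf : ∀ a > 0, IntegrableOn f (Ioc a 1)) (h : f ~[𝓝[>] 0] fun y => c * y ^ γ) :
    (fun y => ∫ u in Ioc y 1, f u) ~[𝓝[>] 0] fun y => c / (-γ - 1) * y ^ (γ + 1) := by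
  have hpow : ∀ y : ℝ, 0 < y → IntegrableOn (fun u : ℝ => u ^ γ) (Ioc y 1) := fun y hy =>
    (intervalIntegral.intervalIntegrable_rpow (.inr (notMem_uIcc_of_lt hy one_pos))).1
  have hrem : (fun y => ∫ u in Ioc y 1, (f u - c * u ^ γ)) =o[𝓝[>] 0] fun y => y ^ (γ + 1) :=
    isLittleO_integral_Ioc_one hγ (fun a ha => (hf a ha).sub ((hpow a ha).const_mul c))
      (h.isLittleO.trans_isBigO ((isBigO_refl _ _).const_mul_left c))
  refine ((hrem.sub (isLittleO_const_rpow_nhdsGT (by linarith) (c / (-γ - 1)))).trans_isBigO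
    (isBigO_self_const_mul (div_ne_zero hc (by linarith)) _ _)).congr' ?_ .rfl
  filter_upwards [Ioo_mem_nhdsGT one_pos] with y ⟨hy0, hy1⟩
  rw [Pi.sub_apply, integral_sub (hf y hy0) ((hpow y hy0).const_mul c), integral_const_mul,
    integral_Ioc_rpow hy1.le (.inr ⟨hγ.ne, notMem_uIcc_of_lt hy0 one_pos⟩), one_rpow]
  field_simp [show γ + 1 ≠ 0 by linarith, show -γ - 1 ≠ 0 by linarith]
  ring

theorem Asymptotics.IsEquivalent.tendsto_rpow_mul {c p q : ℝ} (hpq : q + p = 0)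
    (h : f ~[𝓝[>] 0] fun x => c * x ^ p) :
    Tendsto (fun x => x ^ q * f x) (𝓝[>] 0) (𝓝 c) := by
  refine (IsEquivalent.refl.mul h).symm.tendsto_nhds (tendsto_const_nhds.congr' ?_)
  filter_upwards [self_mem_nhdsWithin] with x (hx : 0 < x)
  rw [Pi.mul_apply, mul_left_comm, ← rpow_add hx, hpq, rpow_zero, mul_one]

theorem AntitoneOn.integrableOn_Ioc {b c : ℝ} (hf : AntitoneOn f (Ioi c)) {a : ℝ} (ha : c < a) :
    IntegrableOn f (Ioc a b) :=
  ((hf.mono fun _ hu => ha.trans_le hu.1).integrableOn_isCompact isCompact_Icc).mono_set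
    Ioc_subset_Icc_self

theorem integrableOn_Ioc_zero_of_isBigO {β : ℝ} (hβ : -1 < β)
    (hf : ∀ a > 0, IntegrableOn f (Ioc a 1)) (h : f =O[𝓝[>] 0] fun y => y ^ β) :
    IntegrableOn f (Ioc 0 1) := by
  have hmeas : AEStronglyMeasurable f (volume.restrict (Ioc 0 1)) := by
    have hunion : Ioc (0 : ℝ) 1 = ⋃ n : ℕ, Ioc (1 / ((n : ℝ) + 1)) 1 := by
      ext x
      simp only [mem_Ioc, mem_iUnion]
      exact ⟨fun hx => (exists_nat_one_div_lt hx.1).imp fun _ hn => ⟨hn, hx.2⟩,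
        fun ⟨_, hn, hx⟩ => ⟨Nat.one_div_pos_of_nat.trans hn, hx⟩⟩
    rw [hunion, aestronglyMeasurable_iUnion_iff]
    exact fun n => (hf _ Nat.one_div_pos_of_nat).aestronglyMeasurable
  obtain ⟨s, hs, hfs⟩ := h.integrableAtFilter ⟨_, Ioc_mem_nhdsGT one_pos, hmeas⟩
    ⟨_, Ioc_mem_nhdsGT one_pos, (intervalIntegral.intervalIntegrable_rpow' hβ).1⟩
  obtain ⟨δ, hδ, hsub⟩ := mem_nhdsGT_iff_exists_Ioo_subset.1 hs
  set b := min (δ / 2) 1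
  have hb : 0 < b := lt_min (half_pos (mem_Ioi.1 hδ)) one_pos
  rw [← Ioc_union_Ioc_eq_Ioc hb.le (min_le_right _ _)]
  exact (hfs.mono_set ((Ioc_subset_Ioo_right ((min_le_left _ _).trans_lt
    (half_lt_self (mem_Ioi.1 hδ)))).trans hsub)).union (hf b hb)

theorem lintegral_ofReal_const_mul_inv_Ioo_eq_top {c b : ℝ} (hc : 0 < c) (hb : 0 < b) :
    ∫⁻ x in Ioo 0 b, ENNReal.ofReal (c * x⁻¹) = ⊤ := by
  by_contra hfin
  have hint := (lintegral_ofReal_ne_top_iff_integrable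
    (measurable_const.mul measurable_inv).aestronglyMeasurable
    ((ae_restrict_mem measurableSet_Ioo).mono fun x hx =>
      mul_nonneg hc.le (inv_nonneg.2 hx.1.le))).1 hfin
  have hinv : IntervalIntegrable (fun x : ℝ => x⁻¹) volume 0 b := by
    rw [intervalIntegrable_iff_integrableOn_Ioo_of_le hb.le]
    exact (hint.const_mul c⁻¹).congr (ae_of_all _ fun x => inv_mul_cancel_left₀ hc.ne' _)
  simp [intervalIntegrable_inv_iff, hb.ne] at hinv

theorem lintegral_ofReal_Ioc_eq_top_of_isEquivalent {c b : ℝ} (hc : 0 < c) (hb : 0 < b)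
    (h : f ~[𝓝[>] 0] fun x => c * x⁻¹) :
    ∫⁻ x in Ioc 0 b, ENNReal.ofReal (f x) = ⊤ := by
  have hlower : ∀ᶠ x in 𝓝[>] 0, c / 2 * x⁻¹ ≤ f x := by
    filter_upwards [isLittleO_iff.1 h.isLittleO (half_pos one_pos), self_mem_nhdsWithin]
      with x hx (hx0 : 0 < x)
    rw [Pi.sub_apply, Real.norm_eq_abs, Real.norm_of_nonneg (by positivity)] at hx
    linarith [(abs_le.1 hx).1]
  obtain ⟨δ, hδ, hbound⟩ := (nhdsGT_basis 0).eventually_iff.1 hlower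
  rw [eq_top_iff, ← lintegral_ofReal_const_mul_inv_Ioo_eq_top (half_pos hc) (lt_min hδ hb)]
  calc ∫⁻ x in Ioo 0 (min δ b), ENNReal.ofReal (c / 2 * x⁻¹)
      ≤ ∫⁻ x in Ioo 0 (min δ b), ENNReal.ofReal (f x) :=
        setLIntegral_mono' measurableSet_Ioo fun x hx =>
          ENNReal.ofReal_le_ofReal (hbound ⟨hx.1, hx.2.trans_le (min_le_left _ _)⟩)
    _ ≤ ∫⁻ x in Ioc 0 b, ENNReal.ofReal (f x) :=
        lintegral_mono_set (Ioo_subset_Ioc_self.trans (Ioc_subset_Ioc_right (min_le_right _ _)))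

end PowerAsymptotics

-- The density `ℓ_{α,ρ}`, its tail `N` and the doubly integrated tail `H`.
noncomputable def lampertiDensity (α ρ r : ℝ) : ℝ := exp (ρ * r) * (exp r - 1) ^ (-(α + 1))

noncomputable def lampertiTail (α ρ u : ℝ) : ℝ := ∫ r in Ioi u, lampertiDensity α ρ r

noncomputable def lampertiDoubleTail (α ρ x : ℝ) : ℝ :=
  ∫ y in Ioc 0 x, ∫ u in Ioc y 1, lampertiTail α ρ u

section Lamperti

variable {α ρ : ℝ}

theorem lampertiDensity_nonneg {r : ℝ} (hr : 0 ≤ r) : 0 ≤ lampertiDensity α ρ r :=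
  mul_nonneg (exp_pos _).le (rpow_nonneg (sub_nonneg.2 (one_le_exp hr)) _)

theorem continuousOn_lampertiDensity : ContinuousOn (lampertiDensity α ρ) (Ioi 0) :=
  (continuous_exp.comp (continuous_const_mul ρ)).continuousOn.mul <|
    (continuous_exp.sub continuous_const).continuousOn.rpow_const fun _ hr =>
      .inl (sub_pos.2 (one_lt_exp_iff.2 hr)).ne'

theorem isEquivalent_lampertiDensity_atTop :
    lampertiDensity α ρ ~[atTop] fun r => exp (-(α + 1 - ρ) * r) := by
  refine isEquivalent_iff_exists_eq_mul.2 ⟨fun r => (1 - exp (-r)) ^ (-(α + 1)), ?_, ?_⟩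
  · simpa using (tendsto_exp_neg_atTop_nhds_zero.const_sub 1).rpow_const (.inl (by norm_num))
  · filter_upwards [eventually_gt_atTop 0] with r hr
    have hfactor : exp r - 1 = (1 - exp (-r)) * exp r := by
      rw [sub_mul, exp_neg, inv_mul_cancel₀ (exp_pos r).ne', one_mul]
    have hpos : 0 ≤ 1 - exp (-r) := sub_nonneg.2 (exp_le_one_iff.2 (by linarith))
    simp only [lampertiDensity, Pi.mul_apply]
    rw [hfactor, mul_rpow hpos (exp_pos r).le, ← exp_mul, mul_left_comm, ← exp_add]
    ring_nf

theorem integrableOn_lampertiDensity_Ioi (hρ : ρ < α + 1) {a : ℝ} (ha : 0 < a) :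
    IntegrableOn (lampertiDensity α ρ) (Ioi a) :=
  integrable_of_isBigO_exp_neg (by linarith)
    (continuousOn_lampertiDensity.mono fun _ hr => ha.trans_le hr)
    isEquivalent_lampertiDensity_atTop.isBigO

theorem isEquivalent_lampertiDensity_nhdsGT :
    lampertiDensity α ρ ~[𝓝[>] 0] fun r => r ^ (-(α + 1)) := by
  have hslope : Tendsto (fun r => (exp r - 1) / r) (𝓝[>] 0) (𝓝 1) := by
    have := (hasDerivAt_iff_tendsto_slope_zero.1 (hasDerivAt_exp 0)).mono_left
      (nhdsWithin_mono _ fun r (hr : r ∈ Ioi (0 : ℝ)) => hr.ne')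
    simpa [div_eq_inv_mul] using this
  refine isEquivalent_iff_exists_eq_mul.2
    ⟨fun r => exp (ρ * r) * ((exp r - 1) / r) ^ (-(α + 1)), ?_, ?_⟩
  · simpa using (((continuous_exp.comp (continuous_const_mul ρ)).tendsto 0).mono_left
      nhdsWithin_le_nhds).mul (hslope.rpow_const (.inl one_ne_zero))
  · filter_upwards [self_mem_nhdsWithin] with r (hr : 0 < r)
    simp only [lampertiDensity, Pi.mul_apply]
    rw [div_rpow (sub_pos.2 (one_lt_exp_iff.2 hr)).le hr.le, mul_assoc,
      div_mul_cancel₀ _ (rpow_pos_of_pos hr _).ne']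

theorem lampertiTail_nonneg {u : ℝ} (hu : 0 ≤ u) : 0 ≤ lampertiTail α ρ u :=
  setIntegral_nonneg measurableSet_Ioi fun _ hr => lampertiDensity_nonneg (hu.trans hr.le)

theorem lampertiTail_eq_integral_Ioc_add (hρ : ρ < α + 1) {u : ℝ} (hu0 : 0 < u)
    (hu1 : u ≤ 1) :
    lampertiTail α ρ u = (∫ r in Ioc u 1, lampertiDensity α ρ r) + lampertiTail α ρ 1 := by
  rw [lampertiTail, lampertiTail,
    ← setIntegral_union (Ioc_disjoint_Ioi le_rfl) measurableSet_Ioi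
    ((integrableOn_lampertiDensity_Ioi hρ hu0).mono_set Ioc_subset_Ioi_self)
    (integrableOn_lampertiDensity_Ioi hρ one_pos), Ioc_union_Ioi_eq_Ioi hu1]

theorem antitoneOn_lampertiTail (hρ : ρ < α + 1) : AntitoneOn (lampertiTail α ρ) (Ioi 0) :=
  fun _ hu _ _ huv => setIntegral_mono_set (integrableOn_lampertiDensity_Ioi hρ hu)
    ((ae_restrict_mem measurableSet_Ioi).mono fun _ hr =>
      lampertiDensity_nonneg (hu.trans hr).le)
    (Ioi_subset_Ioi huv).eventuallyLE

theorem isEquivalent_lampertiTail (hα : 0 < α) (hρ : ρ < α + 1) :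
    lampertiTail α ρ ~[𝓝[>] 0] fun u => α⁻¹ * u ^ (-α) := by
  have hnear : (fun u => ∫ r in Ioc u 1, lampertiDensity α ρ r) ~[𝓝[>] 0]
      fun u => α⁻¹ * u ^ (-α) := by
    refine (IsEquivalent.integral_Ioc_one (by linarith) one_ne_zero
      (fun a ha => (integrableOn_lampertiDensity_Ioi hρ ha).mono_set Ioc_subset_Ioi_self)
      (isEquivalent_lampertiDensity_nhdsGT.congr_right (.of_forall fun r => (one_mul _).symm))
      ).congr_right (.of_forall fun u => ?_)
    ring_nf
  refine (hnear.add_isLittleO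
    ((isLittleO_const_rpow_nhdsGT (by linarith : -α < 0) (lampertiTail α ρ 1)).trans_isBigO
    (isBigO_self_const_mul (inv_ne_zero hα.ne') _ _))).congr_left ?_
  filter_upwards [Ioc_mem_nhdsGT one_pos] with u hu
  exact (lampertiTail_eq_integral_Ioc_add hρ hu.1 hu.2).symm

theorem antitoneOn_integral_lampertiTail (hρ : ρ < α + 1) :
    AntitoneOn (fun y => ∫ u in Ioc y 1, lampertiTail α ρ u) (Ioi 0) :=
  fun _ hy _ _ hyz => setIntegral_mono_set ((antitoneOn_lampertiTail hρ).integrableOn_Ioc hy)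
    ((ae_restrict_mem measurableSet_Ioc).mono fun _ hu =>
      lampertiTail_nonneg (hy.trans hu.1).le)
    (Ioc_subset_Ioc_left hyz).eventuallyLE

theorem isEquivalent_integral_lampertiTail (hα : 1 < α) (hρ : ρ < α + 1) :
    (fun y => ∫ u in Ioc y 1, lampertiTail α ρ u) ~[𝓝[>] 0]
      fun y => (α * (α - 1))⁻¹ * y ^ (1 - α) := by
  refine ((isEquivalent_lampertiTail (by linarith) hρ).integral_Ioc_one (by linarith)
    (by positivity) fun a ha => (antitoneOn_lampertiTail hρ).integrableOn_Ioc ha).congr_right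
    (.of_forall fun y => ?_)
  simp only [mul_inv, div_eq_mul_inv]
  ring_nf

theorem isEquivalent_lampertiDoubleTail (hα : α ∈ Ioo 1 2) (hρ : ρ < α + 1) :
    lampertiDoubleTail α ρ ~[𝓝[>] 0]
      fun x => ((2 - α) * (α - 1) * α)⁻¹ * x ^ (2 - α) := by
  obtain ⟨hα1, hα2⟩ := hα
  have hG := isEquivalent_integral_lampertiTail hα1 hρ
  refine (hG.integral_Ioc_zero (by linarith)
    (inv_ne_zero (mul_pos (by linarith) (by linarith)).ne')
    (integrableOn_Ioc_zero_of_isBigO (by linarith)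
      (fun a ha => (antitoneOn_integral_lampertiTail hρ).integrableOn_Ioc ha)
      (hG.isBigO.trans ((isBigO_refl _ _).const_mul_left _)))).congr_right
    (.of_forall fun x => ?_)
  simp only [mul_inv, div_eq_mul_inv]
  ring_nf

end Lamperti

theorem lamperti_stable_no_upward_creeping
    (α ρ : ℝ) (hα : α ∈ Set.Ioo (1:ℝ) 2) (hρ : ρ < α + 1)
    (N H : ℝ → ℝ)
    (hN : ∀ u : ℝ, N u = ∫ r in Set.Ioi u, Real.exp (ρ * r) * (Real.exp r - 1) ^ (-(α + 1)))
    (hH : ∀ x : ℝ, H x = ∫ y in Set.Ioc (0:ℝ) x, ∫ u in Set.Ioc y 1, N u) :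
    Filter.Tendsto (fun x : ℝ => x ^ (α - 2) * H x) (nhdsWithin 0 (Set.Ioi 0))
        (nhds (1 / ((2 - α) * (α - 1) * α))) ∧
    ∫⁻ x in Set.Ioc (0:ℝ) 1, ENNReal.ofReal (x * N x / H x) = ⊤ := by
  obtain rfl : N = lampertiTail α ρ := funext hN
  obtain rfl : H = lampertiDoubleTail α ρ := funext hH
  have hHequiv := isEquivalent_lampertiDoubleTail hα hρ
  refine ⟨by simpa only [one_div] using hHequiv.tendsto_rpow_mul (by ring), ?_⟩
  obtain ⟨hα1, hα2⟩ := hα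
  have hratio := ((IsEquivalent.refl (u := fun x : ℝ => x)).mul
    (isEquivalent_lampertiTail (by linarith) hρ)).div hHequiv
  refine lintegral_ofReal_Ioc_eq_top_of_isEquivalent (c := (2 - α) * (α - 1))
    (mul_pos (by linarith) (by linarith)) one_pos (hratio.congr_right ?_)
  filter_upwards [self_mem_nhdsWithin] with x (hx : 0 < x)
  have hα0 : α ≠ 0 := by linarith
  have hxα := (rpow_pos_of_pos hx α).ne'
  simp only [Pi.mul_apply, Pi.div_apply]
  rw [rpow_neg hx.le, rpow_sub hx, rpow_two]
  field_simp
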